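/- arXiv:2105.03019 — 2 statements merged into one kernel-verified Lean document; each statement's English description precedes it below -/
import Mathlib

section
/- Let F: ℝⁿ → ℝⁿ be L-Lipschitz with L > 1. Suppose an auxiliary sequence (s̃_t) satisfies: (1) one-step consistency ‖s̃_{t+1} − F(s̃_t)‖ ≤ δ for all t < T, and (2) deviation from the demonstration ‖s_t − s̃_t‖ ≤ κ for all t ≤ T, with s̃_0 = s_0. Then the rollout (ŝ_t) of F from s_0 satisfies ∑_{t=0}^{T} ‖ŝ_t − s_t‖ ≤ κ·T + δ·(L^{T+1} − (T+1)·L + T)/(L − 1)². -/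
/-!
The rollout `ŝ` and the auxiliary trajectory `s̃` start together, and each step of `F` can
amplify their gap by at most `L` while `s̃` drifts from `F`'s prediction by at most `δ`, so
`‖ŝ_t - s̃_t‖ ≤ δ (1 + L + ⋯ + L^{t-1})`. Adding `‖s_t - s̃_t‖ ≤ κ` (which vanishes at `t = 0`)
and summing these geometric sums over `t ≤ T` gives the bound.
-/

open Finset

theorem norm_sub_le_mul_geom_sum_of_lipschitz {E : Type*} [SeminormedAddCommGroup E]
    {F : E → E} {L δ : ℝ} (hL : 0 ≤ L) (hLip : ∀ x y : E, ‖F x - F y‖ ≤ L * ‖x - y‖)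
    {T : ℕ} {u v : ℕ → E} (hu : ∀ t, u (t + 1) = F (u t))
    (hv : ∀ t < T, ‖v (t + 1) - F (v t)‖ ≤ δ) (h0 : u 0 = v 0) :
    ∀ t ≤ T, ‖u t - v t‖ ≤ δ * ∑ i ∈ range t, L ^ i := by
  intro t
  induction t with
  | zero => simp [h0]
  | succ t ih =>
    intro ht
    calc ‖u (t + 1) - v (t + 1)‖
        ≤ ‖F (u t) - F (v t)‖ + ‖v (t + 1) - F (v t)‖ := by
          rw [hu, norm_sub_rev (v (t + 1)) (F (v t))]
          exact norm_sub_le_norm_sub_add_norm_sub _ _ _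
      _ ≤ L * (δ * ∑ i ∈ range t, L ^ i) + δ := by
          gcongr
          · exact (hLip _ _).trans (mul_le_mul_of_nonneg_left (ih (Nat.le_of_succ_le ht)) hL)
          · exact hv t ht
      _ = δ * ∑ i ∈ range (t + 1), L ^ i := by rw [geom_sum_succ]; ring

theorem sum_range_succ_geom_sum_eq {L : ℝ} (hL : L ≠ 1) (T : ℕ) :
    ∑ t ∈ range (T + 1), ∑ i ∈ range t, L ^ i = (L ^ (T + 1) - (T + 1) * L + T) / (L - 1) ^ 2 := by
  have hL' : L - 1 ≠ 0 := sub_ne_zero.mpr hL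
  induction T with
  | zero => simp
  | succ T ih =>
    rw [sum_range_succ, ih, geom_sum_eq hL]
    field_simp
    push_cast
    ring

theorem sum_range_succ_le_mul_of_eq_zero {f : ℕ → ℝ} {κ : ℝ} {T : ℕ} (h0 : f 0 = 0)
    (hf : ∀ t ≤ T, f t ≤ κ) : ∑ t ∈ range (T + 1), f t ≤ κ * T := by
  rw [sum_range_succ', h0, add_zero]
  calc ∑ t ∈ range T, f (t + 1) ≤ ∑ _t ∈ range T, κ :=
        sum_le_sum fun t ht => hf (t + 1) (mem_range.mp ht)
    _ = κ * T := by rw [sum_const, card_range, nsmul_eq_mul, mul_comm]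

/-- Main CoDE theorem (Theorem 2): with auxiliary trajectory `s̃` satisfying a one-step
consistency bound `δ` and deviation bound `κ` from the demonstration, the rollout of
the policy satisfies `∑_{t=0}^{T} ‖shat_t − s_t‖ ≤ κ·T + δ·(L^{T+1} − (T+1)·L + T)/(L−1)²`. -/
theorem code_main_bound {E : Type*} [NormedAddCommGroup E]
    (F : E → E) (L δ κ : ℝ) (hL : 1 < L)
    (hLip : ∀ s s' : E, ‖F s - F s'‖ ≤ L * ‖s - s'‖)
    (T : ℕ) (s stilde shat : ℕ → E)
    (hone : ∀ t : ℕ, t < T → ‖stilde (t + 1) - F (stilde t)‖ ≤ δ)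
    (hdev : ∀ t : ℕ, t ≤ T → ‖s t - stilde t‖ ≤ κ)
    (htilde0 : stilde 0 = s 0)
    (h0 : shat 0 = s 0) (hrec : ∀ t : ℕ, shat (t + 1) = F (shat t)) :
    ∑ t ∈ Finset.range (T + 1), ‖shat t - s t‖ ≤
      κ * (T : ℝ) + δ * (L ^ (T + 1) - (T + 1 : ℝ) * L + (T : ℝ)) / (L - 1) ^ 2 := by
  have hrollout := norm_sub_le_mul_geom_sum_of_lipschitz (by linarith) hLip hrec hone
    (h0.trans htilde0.symm)
  calc ∑ t ∈ range (T + 1), ‖shat t - s t‖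
      ≤ ∑ t ∈ range (T + 1), (‖s t - stilde t‖ + δ * ∑ i ∈ range t, L ^ i) := by
        refine sum_le_sum fun t ht => ?_
        have htri := norm_sub_le_norm_sub_add_norm_sub (shat t) (stilde t) (s t)
        rw [norm_sub_rev (stilde t)] at htri
        linarith [hrollout t (Nat.lt_succ_iff.mp (mem_range.mp ht))]
    _ = ∑ t ∈ range (T + 1), ‖s t - stilde t‖
          + δ * ∑ t ∈ range (T + 1), ∑ i ∈ range t, L ^ i := by
        rw [sum_add_distrib, mul_sum]
    _ ≤ κ * T + δ * (L ^ (T + 1) - (T + 1 : ℝ) * L + T) / (L - 1) ^ 2 := by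
        rw [sum_range_succ_geom_sum_eq hL.ne', mul_div_assoc]
        gcongr
        exact sum_range_succ_le_mul_of_eq_zero (by simp [htilde0]) hdev
end

section
/- Let F be L-Lipschitz with L > 1, let (s_t) be the demonstration and (s̃_t) an auxiliary sequence with s̃_0 = s_0, satisfying ‖s̃_{t+1} − F(s̃_t)‖ ≤ δ and ‖s_t − s̃_t‖ ≤ κ for all relevant t. Then for each individual time step t ≤ T, the rollout ŝ of F from s_0 satisfies ‖ŝ_t − s_t‖ ≤ κ + δ·(L^t − 1)/(L − 1). -/
/-- Per-time-step version of the CoDE bound: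
`‖ŝ_t − s_t‖ ≤ κ + δ·(L^t − 1)/(L − 1)` for each `t ≤ T`. -/
theorem code_per_step_bound {E : Type*} [NormedAddCommGroup E]
    (F : E → E) (L δ κ : ℝ) (hL : 1 < L)
    (hLip : ∀ s s' : E, ‖F s - F s'‖ ≤ L * ‖s - s'‖)
    (T : ℕ) (s stilde shat : ℕ → E)
    (hone : ∀ t : ℕ, t < T → ‖stilde (t + 1) - F (stilde t)‖ ≤ δ)
    (hdev : ∀ t : ℕ, t ≤ T → ‖s t - stilde t‖ ≤ κ)
    (htilde0 : stilde 0 = s 0)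
    (h0 : shat 0 = s 0) (hrec : ∀ t : ℕ, shat (t + 1) = F (shat t)) :
    ∀ t : ℕ, t ≤ T → ‖shat t - s t‖ ≤ κ + δ * (L ^ t - 1) / (L - 1) := by
  have hL0 : (0:ℝ) < L - 1 := by linarith
  have key : ∀ t : ℕ, t ≤ T → ‖shat t - stilde t‖ ≤ δ * (L ^ t - 1) / (L - 1) := by
    intro t
    induction t with
    | zero =>
      intro _
      simp [h0, htilde0]
    | succ t ih =>
      intro ht
      have ht' : t < T := Nat.lt_of_succ_le ht
      have ihb := ih (le_of_lt ht')
      have hδ : 0 ≤ δ := le_trans (norm_nonneg _) (hone t ht')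
      have htri : ‖shat (t+1) - stilde (t+1)‖ ≤
          ‖F (shat t) - F (stilde t)‖ + ‖stilde (t+1) - F (stilde t)‖ := by
        rw [hrec t]
        calc ‖F (shat t) - stilde (t+1)‖
            ≤ ‖F (shat t) - F (stilde t)‖ + ‖F (stilde t) - stilde (t+1)‖ :=
              norm_sub_le_norm_sub_add_norm_sub _ _ _
          _ = ‖F (shat t) - F (stilde t)‖ + ‖stilde (t+1) - F (stilde t)‖ := by
              congr 1; exact norm_sub_rev _ _
      have hlip := hLip (shat t) (stilde t)
      have hL1 : 0 < L := by linarith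
      have hpow : (0:ℝ) ≤ L ^ t := by positivity
      calc ‖shat (t+1) - stilde (t+1)‖
          ≤ L * ‖shat t - stilde t‖ + δ := by
            have := hone t ht'
            linarith
        _ ≤ L * (δ * (L ^ t - 1) / (L - 1)) + δ := by nlinarith
        _ = δ * (L ^ (t+1) - 1) / (L - 1) := by
            field_simp
            ring
  intro t ht
  have h1 := hdev t ht
  have h2 := key t ht
  calc ‖shat t - s t‖ ≤ ‖shat t - stilde t‖ + ‖stilde t - s t‖ :=
        norm_sub_le_norm_sub_add_norm_sub _ _ _
    _ = ‖shat t - stilde t‖ + ‖s t - stilde t‖ := by congr 1; exact norm_sub_rev _ _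
    _ ≤ κ + δ * (L ^ t - 1) / (L - 1) := by linarith
end
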